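/- Let A, B ⊆ [m] with 1 ≤ |A| + |B| ≤ 2m − 1, D = Δ_A + wΔ_B, and D^c = (F_4^m \ {0}) \ D. Then the binary subfield code C^{(2)}_{D^c} has length 2^{2m} − 2^{|A|+|B|}, exactly 2^{2m} distinct codewords (dimension 2m over F_2), and minimum distance 2^{2m−1} − 2^{|A|+|B|−1}; the multiset {wt(c^{(2)}_{D^c}(α,β)) : (α,β) ∈ F_2^m × F_2^m} consists of 0 once, 2^{2m−1} − 2^{|A|+|B|−1} with multiplicity 4^m − 2^{2m−|A|−|B|}, and 2^{2m−1} with multiplicity 2^{2m−|A|−|B|} − 1. Moreover C^{(2)}_{D^c} is a Griesmer code: Σ_{i=0}^{2m−1} ⌈(2^{2m−1} − 2^{|A|+|B|−1}) / 2^i⌉ = 2^{2m} − 2^{|A|+|B|}. -/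

import Mathlib

/-
Writing `d = d₁ + w·d₂`, the entry of `c^{(2)}(α, β)` at `d` is the linear form
`β·d₁ + (α + β)·d₂` in `(d₁, d₂)`. A linear form over `F₂` that is not identically zero on a
subgroup is nonzero on exactly half of it. Hence for `(α, β) ≠ 0` the weight over all of `F₄^m`
is `2^{2m-1}`, while over `D = Δ_A + wΔ_B` it is `0` if `β` vanishes on `A` and `α + β` on `B`
(a subspace of `2^{2m-|A|-|B|}` pairs) and `2^{|A|+|B|-1}` otherwise. Subtracting gives the two
nonzero weights with their multiplicities; both are positive, so the code has dimension `2m`.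
The Griesmer sum is a difference of two geometric series.
-/

open Finset

/-- The support of a binary vector, as a finset of coordinates. -/
def supp {m : ℕ} (v : Fin m → ZMod 2) : Finset (Fin m) :=
  Finset.univ.filter (fun i => v i ≠ 0)

/-- The inner product of two binary vectors. -/
def dot2 {m : ℕ} (u v : Fin m → ZMod 2) : ZMod 2 := ∑ i, u i * v i

/-- The simplicial complex generated by `A`: all binary vectors with support contained in `A`. -/
def delta {m : ℕ} (A : Finset (Fin m)) : Finset (Fin m → ZMod 2) :=
  Finset.univ.filter (fun v => supp v ⊆ A)

variable {F : Type} [Field F] [Fintype F] [DecidableEq F]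

/-- The embedding of `F_2 = {0,1}` into a field `F`. -/
def e2 (a : ZMod 2) : F := (a.val : F)

/-- The quaternary vector `d_1 + w·d_2` attached to a pair of binary vectors. -/
def dvec {m : ℕ} (w : F) (p : (Fin m → ZMod 2) × (Fin m → ZMod 2)) : Fin m → F :=
  fun i => e2 (p.1 i) + w * e2 (p.2 i)

/-- The codeword `c^{(2)}_D(α,β) = (α·d_2 + β·(d_1+d_2))_{d = d_1+w·d_2 ∈ D}` of the binary
subfield code, where `π₁, π₂` extract the components of the unique representation
`g = π₁(g) + w·π₂(g)`. -/
def cw2F {m : ℕ} (D : Finset (Fin m → F)) (π₁ π₂ : F → ZMod 2)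
    (α β : Fin m → ZMod 2) : {d // d ∈ D} → ZMod 2 :=
  fun d => dot2 α (fun i => π₂ (d.1 i)) + dot2 β (fun i => π₁ (d.1 i) + π₂ (d.1 i))

/-- The Hamming weight of the codeword `c^{(2)}_D(α,β)`, counted over the index set `D`. -/
def wt2F {m : ℕ} (D : Finset (Fin m → F)) (π₁ π₂ : F → ZMod 2)
    (α β : Fin m → ZMod 2) : ℕ :=
  (D.filter (fun d =>
    dot2 α (fun i => π₂ (d i)) + dot2 β (fun i => π₁ (d i) + π₂ (d i)) ≠ 0)).card

section BinaryVectors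

variable {m : ℕ}

lemma ZMod.eq_one_of_ne_zero_of_two {z : ZMod 2} (h : z ≠ 0) : z = 1 :=
  Fin.eq_one_of_ne_zero z h

lemma binary_add_self {ι : Type*} (v : ι → ZMod 2) : v + v = 0 :=
  funext fun i => CharTwo.add_self_eq_zero (v i)

lemma binary_eq_of_add_eq_zero {ι : Type*} {u v : ι → ZMod 2} (h : u + v = 0) : u = v :=
  calc u = u + v + v := by rw [add_assoc, binary_add_self, add_zero]
    _ = v := by rw [h, zero_add]

lemma dot2_eq_dotProduct (u v : Fin m → ZMod 2) : dot2 u v = u ⬝ᵥ v := rfl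

lemma mem_delta {A : Finset (Fin m)} {v : Fin m → ZMod 2} :
    v ∈ delta A ↔ ∀ i, v i ≠ 0 → i ∈ A := by
  simp [delta, supp, subset_iff]

lemma mem_delta_compl {A : Finset (Fin m)} {v : Fin m → ZMod 2} :
    v ∈ delta Aᶜ ↔ ∀ i ∈ A, v i = 0 := by
  simp only [mem_delta, mem_compl]
  exact forall_congr' fun i => by tauto

lemma delta_univ : delta (univ : Finset (Fin m)) = univ := by
  ext v
  simp [mem_delta]

lemma zero_mem_delta (A : Finset (Fin m)) : (0 : Fin m → ZMod 2) ∈ delta A := by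
  simp [mem_delta]

lemma add_mem_delta {A : Finset (Fin m)} {u v : Fin m → ZMod 2}
    (hu : u ∈ delta A) (hv : v ∈ delta A) : u + v ∈ delta A := by
  rw [mem_delta] at *
  intro i hi
  by_cases h : u i = 0
  · exact hv i (by simpa [h] using hi)
  · exact hu i h

lemma single_mem_delta {A : Finset (Fin m)} {i : Fin m} (hi : i ∈ A) (x : ZMod 2) :
    Pi.single i x ∈ delta A := by
  rw [mem_delta]
  intro j hj
  by_cases hji : j = i
  · exact hji ▸ hi
  · simp [hji] at hj

lemma card_delta (A : Finset (Fin m)) : #(delta A) = 2 ^ #A := by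
  rw [← card_powerset]
  refine card_nbij' supp (fun s i => if i ∈ s then 1 else 0) ?_ ?_ ?_ ?_
  · intro v hv
    simpa [delta] using hv
  · intro s hs
    rw [mem_coe, mem_delta]
    intro i hi
    exact mem_powerset.1 hs (by simpa using hi)
  · intro v _
    funext i
    by_cases h : v i = 0
    · simp [supp, h]
    · simpa [supp, h] using (ZMod.eq_one_of_ne_zero_of_two h).symm
  · intro s _
    ext i
    simp [supp]

end BinaryVectors

/-- Translation by `s₀` exchanges the zeros and the non-zeros of `f` in `S`. -/
lemma two_mul_card_filter_ne_zero {γ : Type*} [AddMonoid γ] (S : Finset γ) (f : γ → ZMod 2)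
    (s₀ : γ) (hs₀ : s₀ + s₀ = 0) (hS : ∀ x ∈ S, x + s₀ ∈ S) (hf : ∀ x, f (x + s₀) = f x + 1) :
    2 * #(S.filter (f · ≠ 0)) = #S := by
  have hflip : ∀ z : ZMod 2, z + 1 = 0 ↔ z ≠ 0 := by decide
  have hinv : ∀ x : γ, x + s₀ + s₀ = x := fun x => by rw [add_assoc, hs₀, add_zero]
  have hswap : #(S.filter (f · ≠ 0)) = #(S.filter (¬f · ≠ 0)) := by
    refine card_nbij' (· + s₀) (· + s₀) ?_ ?_ (fun x _ => hinv x) (fun x _ => hinv x)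
    · intro x hx
      simp only [coe_filter, Set.mem_ofPred_eq] at hx ⊢
      exact ⟨hS x hx.1, by rw [hf, (hflip _).2 hx.2]; exact not_ne_iff.2 rfl⟩
    · intro x hx
      simp only [coe_filter, Set.mem_ofPred_eq] at hx ⊢
      exact ⟨hS x hx.1, by rw [hf, ← hflip, not_not.1 hx.2]; decide⟩
  have := card_filter_add_card_filter_not (s := S) (f · ≠ 0)
  omega

section PairForm

variable {m : ℕ}

local notation "V" => (Fin m → ZMod 2) × (Fin m → ZMod 2)

/-- The entry of `c^{(2)}(α, β)` at `d = d₁ + w·d₂`, as a function of `p = (d₁, d₂)`. -/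
def pairForm (α β : Fin m → ZMod 2) (p : V) : ZMod 2 :=
  β ⬝ᵥ p.1 + (α + β) ⬝ᵥ p.2

lemma pairForm_add (α β : Fin m → ZMod 2) (p q : V) :
    pairForm α β (p + q) = pairForm α β p + pairForm α β q := by
  simp only [pairForm, Prod.fst_add, Prod.snd_add, dotProduct_add]
  abel

lemma card_univ_pairs : #(univ : Finset V) = 2 ^ (2 * m) := by
  simp [card_univ, ZMod.card, two_mul, pow_add]

/-- The pairs `(α, β)` whose form vanishes on `Δ_A × Δ_B`. -/
def annihilator (A B : Finset (Fin m)) : Finset V :=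
  univ.filter fun ab => ab.2 ∈ delta Aᶜ ∧ ab.1 + ab.2 ∈ delta Bᶜ

lemma dotProduct_eq_zero_of_mem_delta {A : Finset (Fin m)} {u v : Fin m → ZMod 2}
    (hu : u ∈ delta Aᶜ) (hv : v ∈ delta A) : u ⬝ᵥ v = 0 := by
  refine sum_eq_zero fun i _ => ?_
  by_cases h : v i = 0
  · rw [h, mul_zero]
  · rw [mem_delta_compl.1 hu i (mem_delta.1 hv i h), zero_mul]

lemma pairForm_eq_zero_of_mem_annihilator {A B : Finset (Fin m)} {α β : Fin m → ZMod 2}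
    (h : (α, β) ∈ annihilator A B) {p : V} (hp : p ∈ delta A ×ˢ delta B) :
    pairForm α β p = 0 := by
  rw [annihilator, mem_filter] at h
  rw [mem_product] at hp
  rw [pairForm, dotProduct_eq_zero_of_mem_delta h.2.1 hp.1,
    dotProduct_eq_zero_of_mem_delta h.2.2 hp.2, add_zero]

lemma exists_pairForm_eq_one_of_notMem_annihilator {A B : Finset (Fin m)}
    {α β : Fin m → ZMod 2} (h : (α, β) ∉ annihilator A B) :
    ∃ p ∈ delta A ×ˢ delta B, pairForm α β p = 1 := by
  simp only [annihilator, mem_filter, mem_univ, true_and, mem_delta_compl, not_and_or,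
    not_forall, exists_prop] at h
  rcases h with ⟨i, hi, hβ⟩ | ⟨i, hi, hαβ⟩
  · refine ⟨(Pi.single i 1, 0), mem_product.2 ⟨single_mem_delta hi 1, zero_mem_delta B⟩, ?_⟩
    simpa [pairForm] using ZMod.eq_one_of_ne_zero_of_two hβ
  · refine ⟨(0, Pi.single i 1), mem_product.2 ⟨zero_mem_delta A, single_mem_delta hi 1⟩, ?_⟩
    simpa [pairForm] using ZMod.eq_one_of_ne_zero_of_two hαβ

lemma card_filter_pairForm_of_mem_annihilator {A B : Finset (Fin m)} {α β : Fin m → ZMod 2}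
    (h : (α, β) ∈ annihilator A B) :
    #((delta A ×ˢ delta B).filter (pairForm α β · ≠ 0)) = 0 := by
  rw [card_eq_zero, filter_eq_empty_iff]
  exact fun p hp => not_not.2 (pairForm_eq_zero_of_mem_annihilator h hp)

lemma card_filter_pairForm_of_notMem_annihilator {A B : Finset (Fin m)}
    {α β : Fin m → ZMod 2} (h : (α, β) ∉ annihilator A B) :
    #((delta A ×ˢ delta B).filter (pairForm α β · ≠ 0)) = 2 ^ (#A + #B - 1) := by
  obtain ⟨s₀, hs₀, hf⟩ := exists_pairForm_eq_one_of_notMem_annihilator h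
  have hhalf := two_mul_card_filter_ne_zero (delta A ×ˢ delta B) (pairForm α β) s₀
    (Prod.ext (binary_add_self _) (binary_add_self _))
    (fun x hx => by
      rw [mem_product] at hx hs₀ ⊢
      exact ⟨add_mem_delta hx.1 hs₀.1, add_mem_delta hx.2 hs₀.2⟩)
    (fun x => by rw [pairForm_add, hf])
  rw [card_product, card_delta, card_delta, ← pow_add] at hhalf
  obtain ⟨k, hk⟩ := Nat.exists_eq_add_one_of_ne_zero fun h0 : #A + #B = 0 => by
    rw [h0] at hhalf
    omega
  rw [hk, pow_succ] at hhalf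
  rw [hk, Nat.add_sub_cancel]
  omega

lemma mem_annihilator_univ {α β : Fin m → ZMod 2} :
    (α, β) ∈ annihilator univ univ ↔ (α, β) = 0 := by
  have hdelta : ∀ v : Fin m → ZMod 2, v ∈ delta (univ : Finset (Fin m))ᶜ ↔ v = 0 := fun v => by
    rw [mem_delta_compl]
    simp [funext_iff]
  simp only [annihilator, mem_filter, mem_univ, true_and, hdelta, Prod.mk_eq_zero]
  constructor
  · rintro ⟨rfl, h⟩
    exact ⟨by simpa using h, rfl⟩
  · rintro ⟨rfl, rfl⟩
    simp

lemma card_annihilator (A B : Finset (Fin m)) :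
    #(annihilator A B) = 2 ^ (2 * m - #A - #B) := by
  have hbij : #(annihilator A B) = #(delta Aᶜ ×ˢ delta Bᶜ) := by
    refine card_nbij' (fun ab => (ab.2, ab.1 + ab.2)) (fun uv => (uv.1 + uv.2, uv.1))
      ?_ ?_ ?_ ?_
    · intro ab hab
      simpa [annihilator] using hab
    · intro uv huv
      simp only [annihilator, coe_filter, mem_coe, mem_product, Set.mem_ofPred_eq, mem_univ,
        true_and] at huv ⊢
      rwa [add_right_comm, binary_add_self, zero_add]
    · intro ab _
      simp only [add_left_comm ab.2, binary_add_self, add_zero]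
    · intro uv _
      simp only [add_right_comm uv.1, binary_add_self, zero_add]
  rw [hbij, card_product, card_delta, card_delta, ← pow_add, card_compl, card_compl,
    Fintype.card_fin]
  congr 1
  have := card_le_univ A
  have := card_le_univ B
  simp only [Fintype.card_fin] at *
  omega

lemma card_filter_pairForm_ne_zero {α β : Fin m → ZMod 2} (h : (α, β) ≠ 0) :
    #(univ.filter (pairForm α β · ≠ 0)) = 2 ^ (2 * m - 1) := by
  have := card_filter_pairForm_of_notMem_annihilator (A := univ) (B := univ)
    (mt mem_annihilator_univ.1 h)
  rwa [delta_univ, univ_product_univ, card_univ, Fintype.card_fin, ← two_mul] at this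

lemma zero_mem_annihilator (A B : Finset (Fin m)) : (0 : V) ∈ annihilator A B := by
  simp [annihilator, zero_mem_delta]

lemma exists_notMem_annihilator {A B : Finset (Fin m)} (h : 1 ≤ #A + #B) :
    ∃ α β : Fin m → ZMod 2, (α, β) ∉ annihilator A B := by
  have hA := card_le_univ A
  have hB := card_le_univ B
  rw [Fintype.card_fin] at hA hB
  have hlt : #(annihilator A B) < #(univ : Finset V) := by
    rw [card_annihilator, card_univ_pairs]
    exact Nat.pow_lt_pow_right one_lt_two (by omega)
  obtain ⟨ab, -, hab⟩ := exists_mem_notMem_of_card_lt_card hlt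
  exact ⟨ab.1, ab.2, hab⟩

end PairForm

section Transfer

variable {K : Type} [Field K] {w : K} {π₁ π₂ : K → ZMod 2} {m : ℕ}

local notation "V" => (Fin m → ZMod 2) × (Fin m → ZMod 2)

lemma proj_e2_add_mul_e2 [Fintype K] (hK : Fintype.card K = 4)
    (hπ : ∀ g : K, g = e2 (π₁ g) + w * e2 (π₂ g)) (a b : ZMod 2) :
    π₁ (e2 a + w * e2 b) = a ∧ π₂ (e2 a + w * e2 b) = b := by
  set ι : ZMod 2 × ZMod 2 → K := fun ab => e2 ab.1 + w * e2 ab.2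
  have hsurj : Function.Surjective ι := fun g => ⟨(π₁ g, π₂ g), (hπ g).symm⟩
  have hinj : Function.Injective ι :=
    ((Fintype.bijective_iff_surjective_and_card ι).2 ⟨hsurj, by simp [hK]⟩).injective
  exact Prod.ext_iff.1 (@hinj (π₁ (ι (a, b)), π₂ (ι (a, b))) (a, b) (hπ (ι (a, b))).symm)

lemma proj_dvec [Fintype K] (hK : Fintype.card K = 4)
    (hπ : ∀ g : K, g = e2 (π₁ g) + w * e2 (π₂ g)) (p : V) :
    (fun i => π₁ (dvec w p i)) = p.1 ∧ (fun i => π₂ (dvec w p i)) = p.2 :=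
  ⟨funext fun i => (proj_e2_add_mul_e2 hK hπ (p.1 i) (p.2 i)).1,
    funext fun i => (proj_e2_add_mul_e2 hK hπ (p.1 i) (p.2 i)).2⟩

lemma dvec_injective [Fintype K] (hK : Fintype.card K = 4)
    (hπ : ∀ g : K, g = e2 (π₁ g) + w * e2 (π₂ g)) :
    Function.Injective (dvec w : V → Fin m → K) := fun p q h =>
  Prod.ext ((proj_dvec hK hπ p).1.symm.trans (h ▸ (proj_dvec hK hπ q).1))
    ((proj_dvec hK hπ p).2.symm.trans (h ▸ (proj_dvec hK hπ q).2))

lemma dvec_surjective (hπ : ∀ g : K, g = e2 (π₁ g) + w * e2 (π₂ g)) :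
    Function.Surjective (dvec w : V → Fin m → K) := fun d =>
  ⟨(fun i => π₁ (d i), fun i => π₂ (d i)), funext fun i => (hπ (d i)).symm⟩

lemma zero_mem_image_dvec [DecidableEq K] (A B : Finset (Fin m)) :
    (0 : Fin m → K) ∈ (delta A ×ˢ delta B).image (dvec w) :=
  mem_image.2 ⟨0, mem_product.2 ⟨zero_mem_delta A, zero_mem_delta B⟩,
    funext fun i => by simp [dvec, e2]⟩

lemma codeword_dvec [Fintype K] (hK : Fintype.card K = 4)
    (hπ : ∀ g : K, g = e2 (π₁ g) + w * e2 (π₂ g)) (α β : Fin m → ZMod 2) (p : V) :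
    dot2 α (fun i => π₂ (dvec w p i)) + dot2 β (fun i => π₁ (dvec w p i) + π₂ (dvec w p i))
      = pairForm α β p := by
  obtain ⟨h₁, h₂⟩ := proj_dvec hK hπ p
  change dot2 α (fun i => π₂ (dvec w p i))
    + dot2 β ((fun i => π₁ (dvec w p i)) + fun i => π₂ (dvec w p i)) = _
  rw [h₁, h₂, dot2_eq_dotProduct, dot2_eq_dotProduct, pairForm, dotProduct_add, add_dotProduct]
  abel

lemma wt2F_image_dvec [Fintype K] [DecidableEq K] (hK : Fintype.card K = 4)
    (hπ : ∀ g : K, g = e2 (π₁ g) + w * e2 (π₂ g)) (S : Finset V) (α β : Fin m → ZMod 2) :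
    wt2F (S.image (dvec w)) π₁ π₂ α β = #(S.filter (pairForm α β · ≠ 0)) := by
  rw [wt2F, filter_image, card_image_of_injective _ (dvec_injective hK hπ)]
  simp only [codeword_dvec hK hπ]

end Transfer

section Codewords

variable {K : Type} {m : ℕ} (D : Finset (Fin m → K)) (π₁ π₂ : K → ZMod 2)

lemma wt2F_zero_zero : wt2F D π₁ π₂ 0 0 = 0 := by
  simp [wt2F, dot2]

lemma wt2F_eq_zero_iff_cw2F_eq_zero (α β : Fin m → ZMod 2) :
    wt2F D π₁ π₂ α β = 0 ↔ cw2F D π₁ π₂ α β = 0 := by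
  simp [wt2F, cw2F, filter_eq_empty_iff, funext_iff]

lemma cw2F_add (α β α' β' : Fin m → ZMod 2) :
    cw2F D π₁ π₂ (α + α') (β + β') = cw2F D π₁ π₂ α β + cw2F D π₁ π₂ α' β' := by
  funext d
  simp only [cw2F, Pi.add_apply, dot2_eq_dotProduct, add_dotProduct]
  abel

lemma wt2F_sdiff [DecidableEq K] {D' : Finset (Fin m → K)} (h : D' ⊆ D) (α β : Fin m → ZMod 2) :
    wt2F (D \ D') π₁ π₂ α β = wt2F D π₁ π₂ α β - wt2F D' π₁ π₂ α β := by
  rw [wt2F, wt2F, wt2F, ← card_sdiff_of_subset (filter_subset_filter _ h)]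
  congr 1
  ext d
  simp only [mem_filter, mem_sdiff]
  tauto

end Codewords

section Complement

variable {K : Type} [Field K] [Fintype K] [DecidableEq K] {w : K} {π₁ π₂ : K → ZMod 2}
  {m : ℕ} {A B : Finset (Fin m)}

local notation "V" => (Fin m → ZMod 2) × (Fin m → ZMod 2)

/-- `D^c` for the defining set `D = Δ_A + wΔ_B`. -/
abbrev complementDefiningSet (w : K) (A B : Finset (Fin m)) : Finset (Fin m → K) :=
  (univ.erase 0) \ (delta A ×ˢ delta B).image (dvec w)

lemma complementDefiningSet_eq (w : K) (A B : Finset (Fin m)) :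
    complementDefiningSet w A B = univ \ (delta A ×ˢ delta B).image (dvec w) := by
  rw [complementDefiningSet, erase_eq, sdiff_sdiff_left,
    sup_eq_right.2 (singleton_subset_iff.2 (zero_mem_image_dvec A B))]

lemma card_complementDefiningSet (hK : Fintype.card K = 4)
    (hπ : ∀ g : K, g = e2 (π₁ g) + w * e2 (π₂ g)) :
    #(complementDefiningSet w A B) = 2 ^ (2 * m) - 2 ^ (#A + #B) := by
  rw [complementDefiningSet_eq, card_sdiff_of_subset (subset_univ _),
    card_image_of_injective _ (dvec_injective hK hπ), card_product, card_delta, card_delta,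
    ← pow_add, card_univ, Fintype.card_fun, hK, Fintype.card_fin, pow_mul]
  norm_num

lemma wt2F_complementDefiningSet (hK : Fintype.card K = 4)
    (hπ : ∀ g : K, g = e2 (π₁ g) + w * e2 (π₂ g)) (α β : Fin m → ZMod 2) :
    wt2F (complementDefiningSet w A B) π₁ π₂ α β
      = #(univ.filter (pairForm α β · ≠ 0))
        - #((delta A ×ˢ delta B).filter (pairForm α β · ≠ 0)) := by
  rw [complementDefiningSet_eq, wt2F_sdiff _ _ _ (subset_univ _),
    ← image_univ_of_surjective (dvec_surjective hπ), wt2F_image_dvec hK hπ,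
    wt2F_image_dvec hK hπ]

lemma wt2F_complementDefiningSet_of_mem_annihilator (hK : Fintype.card K = 4)
    (hπ : ∀ g : K, g = e2 (π₁ g) + w * e2 (π₂ g)) {α β : Fin m → ZMod 2}
    (h : (α, β) ∈ annihilator A B) (h0 : (α, β) ≠ 0) :
    wt2F (complementDefiningSet w A B) π₁ π₂ α β = 2 ^ (2 * m - 1) := by
  rw [wt2F_complementDefiningSet hK hπ, card_filter_pairForm_ne_zero h0,
    card_filter_pairForm_of_mem_annihilator h, Nat.sub_zero]

lemma wt2F_complementDefiningSet_of_notMem_annihilator (hK : Fintype.card K = 4)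
    (hπ : ∀ g : K, g = e2 (π₁ g) + w * e2 (π₂ g)) {α β : Fin m → ZMod 2}
    (h : (α, β) ∉ annihilator A B) :
    wt2F (complementDefiningSet w A B) π₁ π₂ α β = 2 ^ (2 * m - 1) - 2 ^ (#A + #B - 1) := by
  have h0 : (α, β) ≠ 0 := fun h0 => h (h0 ▸ zero_mem_annihilator A B)
  rw [wt2F_complementDefiningSet hK hπ, card_filter_pairForm_ne_zero h0,
    card_filter_pairForm_of_notMem_annihilator h]

lemma wt2F_complementDefiningSet_eq_zero_iff (hK : Fintype.card K = 4)
    (hπ : ∀ g : K, g = e2 (π₁ g) + w * e2 (π₂ g)) (hs : #A + #B < 2 * m)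
    {α β : Fin m → ZMod 2} :
    wt2F (complementDefiningSet w A B) π₁ π₂ α β = 0 ↔ (α, β) = 0 := by
  refine ⟨fun hwt => ?_, fun h0 => ?_⟩
  · by_contra h0
    by_cases h : (α, β) ∈ annihilator A B
    · rw [wt2F_complementDefiningSet_of_mem_annihilator hK hπ h h0] at hwt
      exact pow_ne_zero _ two_ne_zero hwt
    · rw [wt2F_complementDefiningSet_of_notMem_annihilator hK hπ h] at hwt
      have := Nat.pow_lt_pow_right one_lt_two (show #A + #B - 1 < 2 * m - 1 by omega)
      omega
  · obtain ⟨rfl, rfl⟩ := Prod.mk_eq_zero.1 h0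
    exact wt2F_zero_zero _ _ _

lemma cw2F_complementDefiningSet_injective (hK : Fintype.card K = 4)
    (hπ : ∀ g : K, g = e2 (π₁ g) + w * e2 (π₂ g)) (hs : #A + #B < 2 * m) :
    Function.Injective fun ab : V => cw2F (complementDefiningSet w A B) π₁ π₂ ab.1 ab.2 := by
  intro ab cd h
  have hsum : cw2F (complementDefiningSet w A B) π₁ π₂ (ab.1 + cd.1) (ab.2 + cd.2) = 0 := by
    rw [cw2F_add]
    exact (congrArg (· + _) h).trans (binary_add_self _)
  rw [← wt2F_eq_zero_iff_cw2F_eq_zero, wt2F_complementDefiningSet_eq_zero_iff hK hπ hs,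
    Prod.mk_eq_zero] at hsum
  exact Prod.ext (binary_eq_of_add_eq_zero hsum.1) (binary_eq_of_add_eq_zero hsum.2)

end Complement

lemma Finset.val_map_eq_replicate {γ δ : Type*} {s : Finset γ} {f : γ → δ} {c : δ}
    (h : ∀ x ∈ s, f x = c) : s.val.map f = Multiset.replicate #s c :=
  (Multiset.map_congr rfl h).trans (Multiset.map_const' _ _)

section WeightDistribution

variable {K : Type} [Field K] [Fintype K] [DecidableEq K] {w : K} {π₁ π₂ : K → ZMod 2}
  {m : ℕ} {A B : Finset (Fin m)}

local notation "V" => (Fin m → ZMod 2) × (Fin m → ZMod 2)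

lemma map_wt2F_complementDefiningSet (hK : Fintype.card K = 4)
    (hπ : ∀ g : K, g = e2 (π₁ g) + w * e2 (π₂ g)) :
    univ.val.map (fun ab : V => wt2F (complementDefiningSet w A B) π₁ π₂ ab.1 ab.2)
      = Multiset.replicate 1 0
        + Multiset.replicate (4 ^ m - 2 ^ (2 * m - #A - #B))
            (2 ^ (2 * m - 1) - 2 ^ (#A + #B - 1))
        + Multiset.replicate (2 ^ (2 * m - #A - #B) - 1) (2 ^ (2 * m - 1)) := by
  set N := annihilator A B
  have h0 := zero_mem_annihilator A B
  have hsplit : (univ : Finset V).val = 0 ::ₘ (N.erase 0).val + (univ \ N).val := by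
    rw [erase_val, Multiset.cons_erase h0, sdiff_val,
      add_tsub_cancel_of_le (val_le_iff.2 (subset_univ N))]
  have hN : (N.erase 0).val.map (fun ab : V => wt2F (complementDefiningSet w A B) π₁ π₂ ab.1 ab.2)
      = Multiset.replicate (2 ^ (2 * m - #A - #B) - 1) (2 ^ (2 * m - 1)) := by
    rw [val_map_eq_replicate fun ab hab => wt2F_complementDefiningSet_of_mem_annihilator hK hπ
      (mem_of_mem_erase hab) (ne_of_mem_erase hab), card_erase_of_mem h0, card_annihilator]
  have hNc : (univ \ N).val.map (fun ab : V => wt2F (complementDefiningSet w A B) π₁ π₂ ab.1 ab.2)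
      = Multiset.replicate (4 ^ m - 2 ^ (2 * m - #A - #B))
          (2 ^ (2 * m - 1) - 2 ^ (#A + #B - 1)) := by
    rw [val_map_eq_replicate fun ab hab =>
      wt2F_complementDefiningSet_of_notMem_annihilator hK hπ (mem_sdiff.1 hab).2,
      card_sdiff_of_subset (subset_univ N), card_univ_pairs, card_annihilator, pow_mul]
    norm_num
  rw [hsplit, Multiset.map_add, Multiset.map_cons, hN, hNc, Prod.fst_zero, Prod.snd_zero,
    wt2F_zero_zero, Multiset.replicate_one, ← Multiset.singleton_add]
  abel

end WeightDistribution

lemma sum_range_two_pow_sub_one_sub (k : ℕ) :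
    ∑ i ∈ range k, (2 : ℤ) ^ (k - 1 - i) = 2 ^ k - 1 := by
  rw [sum_range_reflect (fun i => (2 : ℤ) ^ i) k]
  simpa using geom_sum_mul (2 : ℤ) k

lemma ceil_two_pow_sub_two_pow_div {n s i : ℕ} (hs : 1 ≤ s) (hi : i < n) :
    ⌈((2 ^ (n - 1) - 2 ^ (s - 1) : ℚ)) / 2 ^ i⌉
      = 2 ^ (n - 1 - i) - if i < s then 2 ^ (s - 1 - i) else 0 := by
  have hdiv : ∀ k, i ≤ k → (2 : ℚ) ^ k / 2 ^ i = 2 ^ (k - i) := fun k hk => by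
    rw [div_eq_iff (by positivity), ← pow_add, Nat.sub_add_cancel hk]
  rw [sub_div, hdiv (n - 1) (by omega)]
  split_ifs with his
  · rw [hdiv (s - 1) (by omega)]
    exact_mod_cast Int.ceil_intCast ((2 : ℤ) ^ (n - 1 - i) - 2 ^ (s - 1 - i))
  · have hlt : (2 : ℚ) ^ (s - 1) < 2 ^ i := pow_lt_pow_right₀ one_lt_two (by omega)
    rw [Int.ceil_eq_iff]
    push_cast
    constructor
    · linarith [(div_lt_one (by positivity : (0 : ℚ) < 2 ^ i)).2 hlt]
    · have : (0 : ℚ) ≤ 2 ^ (s - 1) / 2 ^ i := by positivity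
      linarith

lemma sum_ceil_two_pow_sub_two_pow_div {n s : ℕ} (hs : 1 ≤ s) (hsn : s ≤ n) :
    ∑ i ∈ range n, ⌈((2 ^ (n - 1) - 2 ^ (s - 1) : ℚ)) / 2 ^ i⌉ = (2 ^ n - 2 ^ s : ℤ) := by
  rw [sum_congr rfl fun i hi => ceil_two_pow_sub_two_pow_div hs (mem_range.1 hi),
    sum_sub_distrib, ← sum_filter]
  have hfilter : (range n).filter (· < s) = range s := by
    ext i
    simp only [mem_filter, mem_range]
    omega
  rw [hfilter, sum_range_two_pow_sub_one_sub, sum_range_two_pow_sub_one_sub]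
  ring

theorem binary_subfield_complement_Griesmer_general {m : ℕ}
    (hF : Fintype.card F = 4) (w : F)
    (π₁ π₂ : F → ZMod 2) (hπ : ∀ g : F, g = e2 (π₁ g) + w * e2 (π₂ g))
    (A B : Finset (Fin m)) (hAB : 1 ≤ A.card + B.card) (hAB' : A.card + B.card ≤ 2 * m - 1) :
    ((Finset.univ.erase (0 : Fin m → F)) \ ((delta A ×ˢ delta B).image (dvec w))).card
      = 2 ^ (2 * m) - 2 ^ (A.card + B.card)
    ∧ (Finset.univ.image
        (fun ab : (Fin m → ZMod 2) × (Fin m → ZMod 2) =>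
          cw2F ((Finset.univ.erase (0 : Fin m → F)) \ ((delta A ×ˢ delta B).image (dvec w)))
            π₁ π₂ ab.1 ab.2)).card
      = 2 ^ (2 * m)
    ∧ ((∀ α β : Fin m → ZMod 2,
          wt2F ((Finset.univ.erase (0 : Fin m → F)) \ ((delta A ×ˢ delta B).image (dvec w)))
            π₁ π₂ α β = 0
          ∨ 2 ^ (2 * m - 1) - 2 ^ (A.card + B.card - 1)
            ≤ wt2F ((Finset.univ.erase (0 : Fin m → F))
                \ ((delta A ×ˢ delta B).image (dvec w))) π₁ π₂ α β)
        ∧ (∃ α β : Fin m → ZMod 2,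
          wt2F ((Finset.univ.erase (0 : Fin m → F)) \ ((delta A ×ˢ delta B).image (dvec w)))
            π₁ π₂ α β = 2 ^ (2 * m - 1) - 2 ^ (A.card + B.card - 1)))
    ∧ (Finset.univ.val.map
        (fun ab : (Fin m → ZMod 2) × (Fin m → ZMod 2) =>
          wt2F ((Finset.univ.erase (0 : Fin m → F)) \ ((delta A ×ˢ delta B).image (dvec w)))
            π₁ π₂ ab.1 ab.2))
      = Multiset.replicate 1 0
        + Multiset.replicate (4 ^ m - 2 ^ (2 * m - A.card - B.card))
            (2 ^ (2 * m - 1) - 2 ^ (A.card + B.card - 1))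
        + Multiset.replicate (2 ^ (2 * m - A.card - B.card) - 1) (2 ^ (2 * m - 1))
    ∧ (∑ i ∈ Finset.range (2 * m),
        ⌈((2 ^ (2 * m - 1) - 2 ^ (A.card + B.card - 1) : ℚ)) / 2 ^ i⌉
        = (2 ^ (2 * m) - 2 ^ (A.card + B.card) : ℤ)) := by
  have hs : #A + #B < 2 * m := by omega
  refine ⟨card_complementDefiningSet hF hπ, ?_, ⟨fun α β => ?_, ?_⟩,
    map_wt2F_complementDefiningSet hF hπ, sum_ceil_two_pow_sub_two_pow_div hAB hs.le⟩
  · rw [card_image_of_injective _ (cw2F_complementDefiningSet_injective hF hπ hs),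
      card_univ_pairs]
  · by_cases h : (α, β) ∈ annihilator A B
    · by_cases h0 : (α, β) = 0
      · exact .inl ((wt2F_complementDefiningSet_eq_zero_iff hF hπ hs).2 h0)
      · exact .inr ((Nat.sub_le _ _).trans_eq
          (wt2F_complementDefiningSet_of_mem_annihilator hF hπ h h0).symm)
    · exact .inr (wt2F_complementDefiningSet_of_notMem_annihilator hF hπ h).ge
  · obtain ⟨α, β, h⟩ := exists_notMem_annihilator hAB
    exact ⟨α, β, wt2F_complementDefiningSet_of_notMem_annihilator hF hπ h⟩

/-- Theorem 5.2: for `D = Δ_A + wΔ_B` with `1 ≤ |A|+|B| ≤ 2m−1`, the binary subfield code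
`C^{(2)}_{D^c}` is a `[2^{2m} − 2^{|A|+|B|}, 2m, 2^{2m−1} − 2^{|A|+|B|−1}]` two-weight
binary code with the stated weight distribution, and it is a Griesmer code. -/
theorem binary_subfield_complement_Griesmer {m : ℕ} (hm : 1 ≤ m)
    (hF : Fintype.card F = 4) (w : F) (hw : w ^ 2 + w + 1 = 0)
    (π₁ π₂ : F → ZMod 2) (hπ : ∀ g : F, g = e2 (π₁ g) + w * e2 (π₂ g))
    (A B : Finset (Fin m)) (hAB : 1 ≤ A.card + B.card) (hAB' : A.card + B.card ≤ 2 * m - 1) :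
    ((Finset.univ.erase (0 : Fin m → F)) \ ((delta A ×ˢ delta B).image (dvec w))).card
      = 2 ^ (2 * m) - 2 ^ (A.card + B.card)
    ∧ (Finset.univ.image
        (fun ab : (Fin m → ZMod 2) × (Fin m → ZMod 2) =>
          cw2F ((Finset.univ.erase (0 : Fin m → F)) \ ((delta A ×ˢ delta B).image (dvec w)))
            π₁ π₂ ab.1 ab.2)).card
      = 2 ^ (2 * m)
    ∧ ((∀ α β : Fin m → ZMod 2,
          wt2F ((Finset.univ.erase (0 : Fin m → F)) \ ((delta A ×ˢ delta B).image (dvec w)))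
            π₁ π₂ α β = 0
          ∨ 2 ^ (2 * m - 1) - 2 ^ (A.card + B.card - 1)
            ≤ wt2F ((Finset.univ.erase (0 : Fin m → F))
                \ ((delta A ×ˢ delta B).image (dvec w))) π₁ π₂ α β)
        ∧ (∃ α β : Fin m → ZMod 2,
          wt2F ((Finset.univ.erase (0 : Fin m → F)) \ ((delta A ×ˢ delta B).image (dvec w)))
            π₁ π₂ α β = 2 ^ (2 * m - 1) - 2 ^ (A.card + B.card - 1)))
    ∧ (Finset.univ.val.map
        (fun ab : (Fin m → ZMod 2) × (Fin m → ZMod 2) =>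
          wt2F ((Finset.univ.erase (0 : Fin m → F)) \ ((delta A ×ˢ delta B).image (dvec w)))
            π₁ π₂ ab.1 ab.2))
      = Multiset.replicate 1 0
        + Multiset.replicate (4 ^ m - 2 ^ (2 * m - A.card - B.card))
            (2 ^ (2 * m - 1) - 2 ^ (A.card + B.card - 1))
        + Multiset.replicate (2 ^ (2 * m - A.card - B.card) - 1) (2 ^ (2 * m - 1))
    ∧ (∑ i ∈ Finset.range (2 * m),
        ⌈((2 ^ (2 * m - 1) - 2 ^ (A.card + B.card - 1) : ℚ)) / 2 ^ i⌉
        = (2 ^ (2 * m) - 2 ^ (A.card + B.card) : ℤ)) :=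
  binary_subfield_complement_Griesmer_general hF w π₁ π₂ hπ A B hAB hAB'
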